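/- arXiv:1407.4711 — 2 statements merged into one kernel-verified Lean document; each statement's English description precedes it below -/
import Mathlib

section
/- (Theorem 3(ii) of the paper.) Let a, b be natural numbers with 0 < a < b and a/b ≥ 1/2. Then every strategy S satisfies V_S(a/b) ≤ a/b − (a/b)^{C(b,a)} · (1 − a/b), where C(b,a) denotes the binomial coefficient b choose a; consequently V(a/b) ≤ a/b − (a/b)^{C(b,a)} · (1 − a/b). -/
open MeasureTheory ENNReal

/-- `μ` is the i.i.d. Bernoulli(`p`) product measure on `ℕ → Bool`
(`true` = white), characterized by its values on cylinder sets. -/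
def IsBernoulliProduct (p : ℝ) (μ : Measure (ℕ → Bool)) : Prop :=
  IsProbabilityMeasure μ ∧
    ∀ (s : Finset ℕ) (c : ℕ → Bool),
      μ {x | ∀ n ∈ s, x n = c n} =
        ∏ n ∈ s, (if c n = true then ENNReal.ofReal p else ENNReal.ofReal (1 - p))

/-- A strategy: a pair of measurable functions, each taking the partner's
hat configuration to the index of the hat the player points at. -/
structure Strategy where
  f₁ : (ℕ → Bool) → ℕ
  f₂ : (ℕ → Bool) → ℕ
  meas₁ : Measurable f₁
  meas₂ : Measurable f₂

/-- The winning probability of a strategy, when each player's hats are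
distributed according to `μ`, independently. -/
noncomputable def winProb (S : Strategy) (μ : Measure (ℕ → Bool)) : ℝ :=
  ((μ.prod μ) {x : (ℕ → Bool) × (ℕ → Bool) |
    x.1 (S.f₁ x.2) = true ∧ x.2 (S.f₂ x.1) = true}).toReal

/-- The value of the game: supremum of winning probabilities over all strategies. -/
noncomputable def gameValue (μ : Measure (ℕ → Bool)) : ℝ :=
  ⨆ S : Strategy, winProb S μ

/-!
Player 1 is right with probability `p = a/b` whatever the strategy, so it suffices to show that
the event "player 1 right, player 2 wrong" has probability at least `(1 - p) p^C(b,a)`.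
Couple player 2's hats with i.i.d. uniform digits `d k ∈ Fin b`: for every `a`-subset `T` of the
digits, `k ↦ (d k ∈ T)` is again a Bernoulli(`p`) configuration. Whatever index player 2 points at,
its digit is avoided by `C(b-1,a)` of the `C(b,a)` sets `T`, so she is wrong for exactly that many
of them; and with probability at least `p^C(b,a)` player 1's hats are white at all the indices he
points at, one for each `T`. Averaging over `T` and using `C(b-1,a) = (1 - p) C(b,a)` gives
the bound.
-/

open Finset

def pointCylinders (ι β : Type*) : Set (Set (ι → β)) :=
  {C | ∃ (s : Finset ι) (c : ι → β), C = {x | ∀ i ∈ s, x i = c i}}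

theorem isPiSystem_pointCylinders {ι β : Type*} : IsPiSystem (pointCylinders ι β) := by
  classical
  rintro _ ⟨s, c, rfl⟩ _ ⟨t, d, rfl⟩ ⟨y, hys, hyt⟩
  refine ⟨s ∪ t, y, Set.ext fun x => ?_⟩
  simp only [Set.mem_inter_iff, Set.mem_ofPred_eq, Finset.mem_union] at hys hyt ⊢
  constructor
  · rintro ⟨hxs, hxt⟩ i (hi | hi)
    · rw [hxs i hi, hys i hi]
    · rw [hxt i hi, hyt i hi]
  · intro hx
    exact ⟨fun i hi => (hx i (.inl hi)).trans (hys i hi),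
      fun i hi => (hx i (.inr hi)).trans (hyt i hi)⟩

theorem generateFrom_pointCylinders {ι β : Type*} [MeasurableSpace β] [Countable β]
    [MeasurableSingletonClass β] :
    MeasurableSpace.generateFrom (pointCylinders ι β) = MeasurableSpace.pi := by
  refine le_antisymm (MeasurableSpace.generateFrom_le ?_) (iSup_le fun i => ?_)
  · rintro _ ⟨s, c, rfl⟩
    simp only [Set.ofPred_forall]
    exact .biInter s.countable_toSet fun i _ => measurable_pi_apply i (measurableSet_singleton _)
  · refine Measurable.comap_le (@measurable_to_countable' β (ι → β) _ _
      (MeasurableSpace.generateFrom (pointCylinders ι β)) (fun x => x i) fun b => ?_)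
    exact MeasurableSpace.measurableSet_generateFrom ⟨{i}, fun _ => b, by ext; simp⟩

theorem Measurable.apply_of_measurable_index {α ι β : Type*} [MeasurableSpace α]
    [MeasurableSpace ι] [Countable ι] [MeasurableSingletonClass ι] [MeasurableSpace β]
    {h : α → ι → β} {g : α → ι} (hh : Measurable h) (hg : Measurable g) :
    Measurable fun z => h z (g z) :=
  (measurable_from_prod_countable_left (f := fun z : α × ι => h z.1 z.2)
    fun i => (measurable_pi_apply i).comp hh).comp (measurable_id.prodMk hg)

theorem card_filter_notMem_powersetCard {α : Type*} [DecidableEq α] {s : Finset α} {v : α}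
    (hv : v ∈ s) (k : ℕ) : #{T ∈ s.powersetCard k | v ∉ T} = (#s - 1).choose k := by
  have : {T ∈ s.powersetCard k | v ∉ T} = (s.erase v).powersetCard k := by
    ext T
    simp only [mem_filter, mem_powersetCard, subset_erase]
    tauto
  rw [this, card_powersetCard, card_erase_of_mem hv]

theorem cast_choose_eq_one_sub_div_mul_choose_succ {n a : ℕ} (ha : a ≤ n + 1) :
    (n.choose a : ℝ) = (1 - a / (n + 1 : ℕ)) * (n + 1).choose a := by
  have h : ((n.choose a * (n + 1) : ℕ) : ℝ) = ((n + 1).choose a * (n + 1 - a) : ℕ) :=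
    congrArg _ (Nat.choose_mul_succ_eq n a)
  push_cast [Nat.cast_sub ha] at h ⊢
  field_simp
  linarith

namespace IsBernoulliProduct

variable {p : ℝ} {μ : Measure (ℕ → Bool)}

theorem measure_forall_eq_true (hμ : IsBernoulliProduct p μ) (s : Finset ℕ) :
    μ {x | ∀ n ∈ s, x n = true} = ENNReal.ofReal p ^ #s := by
  simpa using hμ.2 s fun _ => true

theorem measure_eq_true (hμ : IsBernoulliProduct p μ) (n : ℕ) :
    μ {x | x n = true} = ENNReal.ofReal p := by
  simpa using hμ.measure_forall_eq_true {n}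

theorem unique {ν : Measure (ℕ → Bool)} (hμ : IsBernoulliProduct p μ)
    (hν : IsBernoulliProduct p ν) : μ = ν := by
  have := hμ.1
  refine ext_of_generate_finite _ generateFrom_pointCylinders.symm isPiSystem_pointCylinders
    ?_ (by simp [hν.1.measure_univ])
  rintro _ ⟨s, c, rfl⟩
  rw [hμ.2, hν.2]

theorem pow_card_le_measure_prod (hμ : IsBernoulliProduct p μ) (hp : p ≤ 1) {Ω ι : Type*}
    [MeasurableSpace Ω] (ν : Measure Ω) [IsProbabilityMeasure ν] (𝒯 : Finset ι) {g : ι → Ω → ℕ}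
    (hg : ∀ T, Measurable (g T)) :
    ENNReal.ofReal p ^ #𝒯 ≤ (ν.prod μ) {z | ∀ T ∈ 𝒯, z.2 (g T z.1) = true} := by
  classical
  have := hμ.1
  have hmeas : MeasurableSet {z : Ω × (ℕ → Bool) | ∀ T ∈ 𝒯, z.2 (g T z.1) = true} := by
    simp only [Set.ofPred_forall]
    exact .biInter 𝒯.countable_toSet fun T _ =>
      measurable_snd.apply_of_measurable_index ((hg T).comp measurable_fst)
        (measurableSet_singleton true)
  have hsection : ∀ ω, ENNReal.ofReal p ^ #𝒯 ≤
      μ (Prod.mk ω ⁻¹' {z | ∀ T ∈ 𝒯, z.2 (g T z.1) = true}) := fun ω => by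
    have : Prod.mk ω ⁻¹' {z : Ω × (ℕ → Bool) | ∀ T ∈ 𝒯, z.2 (g T z.1) = true} =
        {y | ∀ n ∈ 𝒯.image (g · ω), y n = true} := by
      ext; simp
    rw [this, hμ.measure_forall_eq_true]
    exact pow_le_pow_right_of_le_one' (ENNReal.ofReal_le_one.2 hp) card_image_le
  calc ENNReal.ofReal p ^ #𝒯 = ∫⁻ _, ENNReal.ofReal p ^ #𝒯 ∂ν := by simp
    _ ≤ _ := lintegral_mono hsection
    _ = _ := (Measure.prod_apply hmeas).symm

end IsBernoulliProduct

theorem isBernoulliProduct_infinitePi {p : ℝ} (β : Measure Bool) [IsProbabilityMeasure β]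
    (htrue : β {true} = ENNReal.ofReal p) (hfalse : β {false} = ENNReal.ofReal (1 - p)) :
    IsBernoulliProduct p (Measure.infinitePi fun _ : ℕ => β) := by
  refine ⟨inferInstance, fun s c => ?_⟩
  have hcyl : {x : ℕ → Bool | ∀ n ∈ s, x n = c n} = Set.pi s fun n => {c n} := by
    ext; simp
  rw [hcyl, Measure.infinitePi_pi _ fun _ _ => measurableSet_singleton _]
  refine prod_congr rfl fun n _ => ?_
  cases c n <;> simp [htrue, hfalse]

theorem isBernoulliProduct_map_infinitePi {α : Type*} [MeasurableSpace α] {p : ℝ} (hp : 0 ≤ p)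
    (ρ : Measure α) [IsProbabilityMeasure ρ] {f : α → Bool} (hf : Measurable f)
    (hρf : ρ {x | f x = true} = ENNReal.ofReal p) :
    IsBernoulliProduct p ((Measure.infinitePi fun _ : ℕ => ρ).map fun d n => f (d n)) := by
  have := Measure.isProbabilityMeasure_map (μ := ρ) hf.aemeasurable
  rw [Measure.infinitePi_map_pi _ fun _ => hf]
  refine isBernoulliProduct_infinitePi _ ?_ ?_
  · rwa [Measure.map_apply hf (measurableSet_singleton _)]
  · have hmeas : MeasurableSet {x | f x = true} := hf (measurableSet_singleton true)
    rw [Measure.map_apply hf (measurableSet_singleton _), ENNReal.ofReal_sub _ hp,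
      ENNReal.ofReal_one, ← hρf, ← prob_compl_eq_one_sub hmeas]
    congr 1
    ext; simp

theorem map_infinitePi_uniform_decide_mem_eq {α : Type*} [Fintype α] [DecidableEq α]
    [Nonempty α] [MeasurableSpace α] [DiscreteMeasurableSpace α] (T : Finset α)
    {μ : Measure (ℕ → Bool)} (hμ : IsBernoulliProduct (#T / Fintype.card α) μ) :
    (Measure.infinitePi fun _ : ℕ => (PMF.uniformOfFintype α).toMeasure).map
      (fun d k => decide (d k ∈ T)) = μ := by
  refine (isBernoulliProduct_map_infinitePi (by positivity) _
    (Measurable.of_discrete (f := fun x : α => decide (x ∈ T))) ?_).unique hμ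
  have : {x : α | decide (x ∈ T) = true} = ↑T := by ext; simp
  rw [this, PMF.toMeasure_apply_finset, ENNReal.ofReal_div_of_pos (by positivity),
    ENNReal.ofReal_natCast, ENNReal.ofReal_natCast]
  simp [div_eq_mul_inv]

namespace Strategy

variable (S : Strategy)

def firstCorrect : Set ((ℕ → Bool) × (ℕ → Bool)) := {x | x.1 (S.f₁ x.2) = true}

def onlyFirstCorrect : Set ((ℕ → Bool) × (ℕ → Bool)) :=
  {x | x.1 (S.f₁ x.2) = true ∧ x.2 (S.f₂ x.1) = false}

theorem measurableSet_firstCorrect : MeasurableSet S.firstCorrect :=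
  measurable_fst.apply_of_measurable_index (S.meas₁.comp measurable_snd)
    (measurableSet_singleton true)

theorem measurableSet_secondCorrect :
    MeasurableSet {x : (ℕ → Bool) × (ℕ → Bool) | x.2 (S.f₂ x.1) = true} :=
  measurable_snd.apply_of_measurable_index (S.meas₂.comp measurable_fst)
    (measurableSet_singleton true)

theorem firstCorrect_diff_secondCorrect :
    S.firstCorrect \ {x | x.2 (S.f₂ x.1) = true} = S.onlyFirstCorrect := by
  ext; simp [firstCorrect, onlyFirstCorrect]

theorem measurableSet_onlyFirstCorrect : MeasurableSet S.onlyFirstCorrect :=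
  S.firstCorrect_diff_secondCorrect ▸
    S.measurableSet_firstCorrect.diff S.measurableSet_secondCorrect

theorem measure_firstCorrect {p : ℝ} {μ : Measure (ℕ → Bool)} (hμ : IsBernoulliProduct p μ) :
    (μ.prod μ) S.firstCorrect = ENNReal.ofReal p := by
  have := hμ.1
  rw [Measure.prod_apply_symm S.measurableSet_firstCorrect]
  simp [firstCorrect, hμ.measure_eq_true]

theorem winProb_eq_sub {p : ℝ} (hp : 0 ≤ p) {μ : Measure (ℕ → Bool)}
    (hμ : IsBernoulliProduct p μ) :
    winProb S μ = p - ((μ.prod μ) S.onlyFirstCorrect).toReal := by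
  have := hμ.1
  have hsplit :=
    measure_inter_add_sdiff (μ := μ.prod μ) S.firstCorrect S.measurableSet_secondCorrect
  rw [S.firstCorrect_diff_secondCorrect, S.measure_firstCorrect hμ] at hsplit
  rw [eq_sub_iff_add_eq, winProb, ← ENNReal.toReal_add (by finiteness) (by finiteness)]
  exact hsplit ▸ ENNReal.toReal_ofReal hp

theorem card_mul_measure_le_card_mul_measure_onlyFirstCorrect {Ω ι : Type*} [MeasurableSpace Ω]
    {ν : Measure Ω} [SFinite ν] {μ : Measure (ℕ → Bool)} [SFinite μ] (𝒯 : Finset ι)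
    {ξ : ι → Ω → ℕ → Bool} (hξ : ∀ T, Measurable (ξ T)) (hlaw : ∀ T ∈ 𝒯, ν.map (ξ T) = μ)
    {m : ℕ} (hm : ∀ ω n, m ≤ #{T ∈ 𝒯 | ξ T ω n = false}) :
    m * (ν.prod μ) {z | ∀ T ∈ 𝒯, z.2 (S.f₁ (ξ T z.1)) = true} ≤
      #𝒯 * (μ.prod μ) S.onlyFirstCorrect := by
  classical
  set E := {z : Ω × (ℕ → Bool) | ∀ T ∈ 𝒯, z.2 (S.f₁ (ξ T z.1)) = true}
  set φ : ι → Ω × (ℕ → Bool) → (ℕ → Bool) × (ℕ → Bool) := fun T z => (z.2, ξ T z.1)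
  have hφ : ∀ T, Measurable (φ T) := fun T => measurable_snd.prodMk ((hξ T).comp measurable_fst)
  have hK := S.measurableSet_onlyFirstCorrect
  have hE : E = ⋂ T ∈ 𝒯, φ T ⁻¹' S.firstCorrect := by
    ext; simp [E, φ, firstCorrect]
  have hEmeas : MeasurableSet E :=
    hE ▸ .biInter 𝒯.countable_toSet fun T _ => hφ T S.measurableSet_firstCorrect
  have hmap : ∀ T ∈ 𝒯, (ν.prod μ).map (φ T) = μ.prod μ := fun T hT => by
    have : φ T = Prod.swap ∘ Prod.map (ξ T) id := rfl
    rw [this, ← Measure.map_map measurable_swap ((hξ T).prodMap measurable_id),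
      ← Measure.map_prod_map _ _ (hξ T) measurable_id, hlaw T hT, Measure.map_id,
      Measure.prod_swap]
  have hpoint : ∀ z, E.indicator (fun _ => (m : ℝ≥0∞)) z ≤
      ∑ T ∈ 𝒯, (φ T ⁻¹' S.onlyFirstCorrect).indicator 1 z := fun z => by
    by_cases hz : z ∈ E
    · have : {T ∈ 𝒯 | φ T z ∈ S.onlyFirstCorrect} = {T ∈ 𝒯 | ξ T z.1 (S.f₂ z.2) = false} :=
        filter_congr fun T hT => by simp [φ, onlyFirstCorrect, hz T hT]
      simp only [Set.indicator_of_mem hz, Set.indicator_apply, Set.mem_preimage, Pi.one_apply,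
        sum_boole, this]
      exact_mod_cast hm z.1 (S.f₂ z.2)
    · simp [Set.indicator_of_notMem hz]
  calc m * (ν.prod μ) E = ∫⁻ z, E.indicator (fun _ => (m : ℝ≥0∞)) z ∂(ν.prod μ) :=
        (lintegral_indicator_const hEmeas _).symm
    _ ≤ ∫⁻ z, ∑ T ∈ 𝒯, (φ T ⁻¹' S.onlyFirstCorrect).indicator 1 z ∂(ν.prod μ) :=
        lintegral_mono hpoint
    _ = ∑ T ∈ 𝒯, (ν.prod μ) (φ T ⁻¹' S.onlyFirstCorrect) := by
        rw [lintegral_finsetSum _ fun T _ => measurable_one.indicator (hφ T hK)]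
        exact sum_congr rfl fun T _ => lintegral_indicator_one (hφ T hK)
    _ = #𝒯 * (μ.prod μ) S.onlyFirstCorrect := by
        rw [sum_congr rfl fun T hT => by rw [← Measure.map_apply (hφ T) hK, hmap T hT],
          sum_const, nsmul_eq_mul]

theorem winProb_le_sub_pow_choose_mul {a b : ℕ} (hab : a < b) {μ : Measure (ℕ → Bool)}
    (hμ : IsBernoulliProduct ((a : ℝ) / b) μ) (S : Strategy) :
    winProb S μ ≤ (a : ℝ) / b - ((a : ℝ) / b) ^ (b.choose a) * (1 - (a : ℝ) / b) := by
  obtain ⟨n, rfl⟩ : ∃ n, b = n + 1 := ⟨b - 1, by omega⟩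
  have := hμ.1
  set p : ℝ := a / (n + 1 : ℕ)
  have hp0 : 0 ≤ p := by positivity
  have hp1 : p ≤ 1 := div_le_one_of_le₀ (by exact_mod_cast hab.le) (by positivity)
  set ν := Measure.infinitePi fun _ : ℕ => (PMF.uniformOfFintype (Fin (n + 1))).toMeasure
  set ξ : Finset (Fin (n + 1)) → (ℕ → Fin (n + 1)) → ℕ → Bool := fun T d k => decide (d k ∈ T)
  set 𝒯 := (univ : Finset (Fin (n + 1))).powersetCard a
  have hξ : ∀ T, Measurable (ξ T) := fun T => measurable_pi_lambda _ fun k =>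
    (Measurable.of_discrete (f := fun x => decide (x ∈ T))).comp (measurable_pi_apply k)
  have hlaw : ∀ T ∈ 𝒯, ν.map (ξ T) = μ := fun T hT =>
    map_infinitePi_uniform_decide_mem_eq T (by simpa [(mem_powersetCard.1 hT).2, p] using hμ)
  have hcount : ∀ d k, n.choose a ≤ #{T ∈ 𝒯 | ξ T d k = false} := fun d k => by
    simp [ξ, 𝒯, card_filter_notMem_powersetCard (mem_univ (d k))]
  have hcard : #𝒯 = (n + 1).choose a := by simp [𝒯]
  have hE := hμ.pow_card_le_measure_prod hp1 ν 𝒯 fun T => S.meas₁.comp (hξ T)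
  have hdc := S.card_mul_measure_le_card_mul_measure_onlyFirstCorrect 𝒯 hξ hlaw hcount
  have hK : (n.choose a : ℝ) * p ^ (n + 1).choose a ≤
      (n + 1).choose a * ((μ.prod μ) S.onlyFirstCorrect).toReal := by
    have := ENNReal.toReal_mono (by finiteness) ((mul_le_mul_right hE _).trans hdc)
    simpa [hcard, ENNReal.toReal_pow, ENNReal.toReal_ofReal hp0] using this
  rw [cast_choose_eq_one_sub_div_mul_choose_succ hab.le] at hK
  have hpos : (0 : ℝ) < (n + 1).choose a := by exact_mod_cast Nat.choose_pos hab.le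
  have : p ^ (n + 1).choose a * (1 - p) ≤ ((μ.prod μ) S.onlyFirstCorrect).toReal :=
    le_of_mul_le_mul_left (by linarith) hpos
  rw [S.winProb_eq_sub hp0 hμ]
  linarith

end Strategy

theorem upper_bound_ge_half_general (a b : ℕ) (hab : a < b)
    (μ : Measure (ℕ → Bool)) (hμ : IsBernoulliProduct ((a : ℝ) / b) μ) :
    (∀ S : Strategy,
      winProb S μ ≤ (a : ℝ) / b - ((a : ℝ) / b) ^ (b.choose a) * (1 - (a : ℝ) / b)) ∧
    gameValue μ ≤ (a : ℝ) / b - ((a : ℝ) / b) ^ (b.choose a) * (1 - (a : ℝ) / b) := by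
  have hS := fun S : Strategy => S.winProb_le_sub_pow_choose_mul hab hμ
  have : Nonempty Strategy := ⟨⟨fun _ => 0, fun _ => 0, measurable_const, measurable_const⟩⟩
  exact ⟨hS, ciSup_le hS⟩

/-- Theorem 3(ii) of the paper: the upper bound
`V(a/b) ≤ a/b − (a/b)^(C(b,a)) · (1 − a/b)` when `a/b ≥ 1/2`. -/
theorem upper_bound_ge_half (a b : ℕ) (ha : 0 < a) (hab : a < b)
    (hge : (1 : ℝ) / 2 ≤ (a : ℝ) / b)
    (μ : Measure (ℕ → Bool)) (hμ : IsBernoulliProduct ((a : ℝ) / b) μ) :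
    (∀ S : Strategy,
      winProb S μ ≤ (a : ℝ) / b - ((a : ℝ) / b) ^ (b.choose a) * (1 - (a : ℝ) / b)) ∧
    gameValue μ ≤ (a : ℝ) / b - ((a : ℝ) / b) ^ (b.choose a) * (1 - (a : ℝ) / b) :=
  upper_bound_ge_half_general a b hab μ hμ
end

section
/- Let g : (Fin 3 → Bool) → Fin 3 be the function determined by the set of white (true) positions of its argument as follows (positions 0-indexed): ∅ ↦ 0, {0} ↦ 0, {1} ↦ 2, {0,1} ↦ 0, {2} ↦ 1, {0,2} ↦ 1, {1,2} ↦ 2, {0,1,2} ↦ 0. Then for every p ∈ [0,1], the symmetric 3-hat strategy (g, g) has win probability 3p²q⁴ + 6p³q³ + 8p⁴q² + 4p⁵q + p⁶ = 3p² − 6p³ + 8p⁴ − 6p⁵ + 2p⁶, where q = 1 − p. -/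
/-! Everything is finite: a hat configuration `x` has probability `p ^ #white * (1 - p) ^ #black`,
so the win probability of a strategy is the sum of `P(x₁) P(x₂)` over the winning pairs
`(x₁, x₂)`. For `optStrat3` this is a sum over `8 × 8` pairs, evaluated by enumeration. -/

open MeasureTheory ENNReal

/-- The Bernoulli(`p`) measure on `Bool` (`true` = white with probability `p`). -/
noncomputable def bern (p : ℝ) : Measure Bool :=
  ENNReal.ofReal p • Measure.dirac true + ENNReal.ofReal (1 - p) • Measure.dirac false

instance (p : ℝ) : IsFiniteMeasure (bern p) := by
  constructor
  simp [bern]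

/-- Product of three i.i.d. Bernoulli(`p`) hats. -/
noncomputable def hat3 (p : ℝ) : Measure (Fin 3 → Bool) := Measure.pi fun _ => bern p

/-- The winning probability of a 3-hat strategy `(g₁, g₂)` in the 3-hat game. -/
noncomputable def winProb3 (g₁ g₂ : (Fin 3 → Bool) → Fin 3) (p : ℝ) : ℝ :=
  (((hat3 p).prod (hat3 p)) {x : (Fin 3 → Bool) × (Fin 3 → Bool) |
    x.1 (g₁ x.2) = true ∧ x.2 (g₂ x.1) = true}).toReal

/-- The optimal symmetric 3-hat strategy of Table 1 (positions 0-indexed):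
`∅ ↦ 0, {0} ↦ 0, {1} ↦ 2, {0,1} ↦ 0, {2} ↦ 1, {0,2} ↦ 1, {1,2} ↦ 2, {0,1,2} ↦ 0`. -/
def optStrat3 : (Fin 3 → Bool) → Fin 3 := fun x =>
  match x 0, x 1, x 2 with
  | false, false, false => 0
  | true,  false, false => 0
  | false, true,  false => 2
  | true,  true,  false => 0
  | false, false, true  => 1
  | true,  false, true  => 1
  | false, true,  true  => 2
  | true,  true,  true  => 0

open Finset

theorem measureReal_eq_sum_singleton {α : Type*} [Fintype α] [MeasurableSpace α]
    [MeasurableSingletonClass α] (μ : Measure α) [SigmaFinite μ] (s : Set α)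
    [DecidablePred (· ∈ s)] : μ.real s = ∑ x with x ∈ s, μ.real {x} := by
  rw [sum_measureReal_singleton, coe_filter_univ, Set.ofPred_mem_eq]

theorem measureReal_pi_singleton {ι : Type*} [Fintype ι] [DecidableEq ι] {X : ι → Type*}
    [∀ i, MeasurableSpace (X i)] (μ : ∀ i, Measure (X i)) [∀ i, SigmaFinite (μ i)] (x : ∀ i, X i) :
    (Measure.pi μ).real {x} = ∏ i, (μ i).real {x i} := by
  rw [← Set.univ_pi_singleton, measureReal_def, Measure.pi_pi, ENNReal.toReal_prod]
  rfl

theorem bern_real_singleton {p : ℝ} (hp : p ∈ Set.Icc (0 : ℝ) 1) (b : Bool) :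
    (bern p).real {b} = bif b then p else 1 - p := by
  cases b <;> simp [bern, measureReal_def, hp.1, hp.2]

noncomputable def configProb {ι : Type*} [Fintype ι] (p : ℝ) (x : ι → Bool) : ℝ :=
  ∏ i, bif x i then p else 1 - p

instance (p : ℝ) : IsFiniteMeasure (hat3 p) := by
  unfold hat3
  infer_instance

theorem hat3_real_singleton {p : ℝ} (hp : p ∈ Set.Icc (0 : ℝ) 1) (x : Fin 3 → Bool) :
    (hat3 p).real {x} = configProb p x := by
  simp only [hat3, measureReal_pi_singleton, bern_real_singleton hp, configProb]

theorem winProb3_eq_sum {p : ℝ} (hp : p ∈ Set.Icc (0 : ℝ) 1) (g₁ g₂ : (Fin 3 → Bool) → Fin 3) :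
    winProb3 g₁ g₂ p = ∑ x₁, ∑ x₂,
      if x₁ (g₁ x₂) = true ∧ x₂ (g₂ x₁) = true then configProb p x₁ * configProb p x₂ else 0 := by
  classical
  rw [winProb3, ← measureReal_def, measureReal_eq_sum_singleton, sum_filter,
    ← univ_product_univ, sum_product]
  simp only [← Set.singleton_prod_singleton, measureReal_prod_prod, hat3_real_singleton hp,
    Set.mem_ofPred_eq]

theorem Fin.sum_pi_succ {n : ℕ} {α M : Type*} [Fintype α] [AddCommMonoid M]
    (f : (Fin (n + 1) → α) → M) : ∑ x, f x = ∑ a, ∑ x : Fin n → α, f (Fin.cons a x) := by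
  rw [← (Fin.consEquiv fun _ => α).sum_comp, Fintype.sum_prod_type]
  rfl

theorem Fin.sum_pi_three {α M : Type*} [Fintype α] [AddCommMonoid M] (f : (Fin 3 → α) → M) :
    ∑ x, f x = ∑ a, ∑ b, ∑ c, f ![a, b, c] := by
  simp only [Fin.sum_pi_succ, Fintype.sum_unique]
  rfl

theorem optStrat3_winProb_eq {p : ℝ} (hp : p ∈ Set.Icc (0 : ℝ) 1) :
    winProb3 optStrat3 optStrat3 p = 3 * p ^ 2 - 6 * p ^ 3 + 8 * p ^ 4 - 6 * p ^ 5 + 2 * p ^ 6 := by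
  rw [winProb3_eq_sum hp]
  simp [Fin.sum_pi_three, configProb, Fin.prod_univ_three, optStrat3]
  ring

/-- The symmetric 3-hat strategy `(optStrat3, optStrat3)` wins with probability
`3p²q⁴ + 6p³q³ + 8p⁴q² + 4p⁵q + p⁶ = 3p² − 6p³ + 8p⁴ − 6p⁵ + 2p⁶` where `q = 1 − p`. -/
theorem optStrat3_winProb (p : ℝ) (hp : p ∈ Set.Icc (0 : ℝ) 1) :
    winProb3 optStrat3 optStrat3 p =
      3 * p ^ 2 * (1 - p) ^ 4 + 6 * p ^ 3 * (1 - p) ^ 3 + 8 * p ^ 4 * (1 - p) ^ 2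
        + 4 * p ^ 5 * (1 - p) + p ^ 6 ∧
    winProb3 optStrat3 optStrat3 p =
      3 * p ^ 2 - 6 * p ^ 3 + 8 * p ^ 4 - 6 * p ^ 5 + 2 * p ^ 6 := by
  have h := optStrat3_winProb_eq hp
  exact ⟨by rw [h]; ring, h⟩
end
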